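/- Let τ : S_n(ℂ) → S_m(ℂ) be a quantum channel with Kraus operators A_1,…,A_l and A(τ) := ∑_{i=1}^l A_i A_i^*. Then for every integer p ≥ 1, the minimum output entropy of the p-fold tensor power satisfies H(⊗^p τ) ≥ −p · log λ_1(A(τ)). -/

import Mathlib

open scoped ComplexOrder
open Matrix Kronecker

/-- Frobenius norm of a complex matrix: `√(tr (X Xᴴ))`. -/
noncomputable def frobNorm {n m : Type*} [Fintype n] [Fintype m]
    (X : Matrix n m ℂ) : ℝ :=
  Real.sqrt ((X * Xᴴ).trace.re)

/-- Operator norm `σ₁(τ) = ‖τ‖` of a map between spaces of Hermitian matrices,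
with respect to the Frobenius norm. -/
noncomputable def opNorm {n m : Type*} [Fintype n] [Fintype m]
    (τ : Matrix n n ℂ → Matrix m m ℂ) : ℝ :=
  sSup {c : ℝ | ∃ X : Matrix n n ℂ, X.IsHermitian ∧ frobNorm X ≤ 1 ∧ c = frobNorm (τ X)}

/-- The second singular value of a map between spaces of Hermitian matrices, via the
Courant–Fischer min-max characterization: the infimum over nonzero Hermitian `U` of the
norm of `τ` restricted to the orthogonal complement of `U`. -/
noncomputable def sigma2 {n m : Type*} [Fintype n] [Fintype m]
    (τ : Matrix n n ℂ → Matrix m m ℂ) : ℝ :=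
  sInf {c : ℝ | ∃ U : Matrix n n ℂ, U.IsHermitian ∧ U ≠ 0 ∧
    c = sSup {d : ℝ | ∃ X : Matrix n n ℂ, X.IsHermitian ∧ frobNorm X ≤ 1 ∧
      (U * X).trace.re = 0 ∧ d = frobNorm (τ X)}}

/-- Largest eigenvalue `λ₁` of a Hermitian matrix (junk value `0` otherwise). -/
noncomputable def lambdaMax {n : Type*} [Fintype n] [DecidableEq n]
    (Y : Matrix n n ℂ) : ℝ :=
  if hY : Y.IsHermitian then ⨆ i, hY.eigenvalues i else 0

/-- von Neumann entropy `H(Y) = -∑ λᵢ log λᵢ` of a Hermitian matrix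
(junk value `0` otherwise); note `Real.log 0 = 0`. -/
noncomputable def entropy {n : Type*} [Fintype n] [DecidableEq n]
    (Y : Matrix n n ℂ) : ℝ :=
  if hY : Y.IsHermitian then -∑ i, hY.eigenvalues i * Real.log (hY.eigenvalues i) else 0

/-- Minimum output entropy of a channel: the infimum of `H(τ X)` over density matrices `X`. -/
noncomputable def minEntropy {n m : Type*} [Fintype n] [DecidableEq n] [Fintype m] [DecidableEq m]
    (τ : Matrix n n ℂ → Matrix m m ℂ) : ℝ :=
  sInf {h : ℝ | ∃ X : Matrix n n ℂ, X.PosSemidef ∧ X.trace = 1 ∧ h = entropy (τ X)}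

/-- Eigenvalues of a Hermitian matrix arranged in decreasing order:
`eigsDesc Y 0 = λ₁ ≥ eigsDesc Y 1 = λ₂ ≥ …` (junk value `0` if not Hermitian). -/
noncomputable def eigsDesc {n : ℕ} (Y : Matrix (Fin n) (Fin n) ℂ) : Fin n → ℝ :=
  if hY : Y.IsHermitian then fun i => hY.eigenvalues (Tuple.sort hY.eigenvalues i.rev)
  else fun _ => 0

/-- The sum `λ₁ + ⋯ + λ_k` of the `k` largest eigenvalues of a Hermitian matrix. -/
noncomputable def sumTopEigs {n : ℕ} (k : ℕ) (Y : Matrix (Fin n) (Fin n) ℂ) : ℝ :=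
  ∑ i : Fin n, if (i : ℕ) < k then eigsDesc Y i else 0

/-- The p-fold Kronecker product A_{i 1} ⊗ ⋯ ⊗ A_{i p} of Kraus operators,
realized as a matrix indexed by p-tuples. -/
noncomputable def kronPow {l m n : ℕ} (p : ℕ) (A : Fin l → Matrix (Fin m) (Fin n) ℂ)
    (i : Fin p → Fin l) : Matrix (Fin p → Fin m) (Fin p → Fin n) ℂ :=
  Matrix.of fun r c => ∏ j, A (i j) (r j) (c j)

/-!
Let `Kᵢ` be the Kraus operators of `⊗ᵖτ` and `M = ∑ᵢ Aᵢ Aᵢᴴ`. For a density matrix `X` the output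
`Y = ∑ᵢ Kᵢ X Kᵢᴴ` is again a density matrix, and since `X ≤ 1` in the Loewner order,
`Y ≤ ∑ᵢ Kᵢ Kᵢᴴ = M^{⊗p} ≤ λ₁(M)ᵖ • 1`, the last step by the mixed-product property of Kronecker
products. Finally a density matrix with all eigenvalues `yᵢ ≤ t` has entropy
`-∑ yᵢ log yᵢ ≥ -∑ yᵢ log t = -log t`.
-/

open scoped MatrixOrder

namespace Matrix

section Spectrum

variable {ι : Type*} [Fintype ι] [DecidableEq ι]

lemma IsHermitian.le_smul_one_iff {M : Matrix ι ι ℂ} (hM : M.IsHermitian) {t : ℝ} :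
    M ≤ t • (1 : Matrix ι ι ℂ) ↔ ∀ i, hM.eigenvalues i ≤ t := by
  rw [← Algebra.algebraMap_eq_smul_one, le_algebraMap_iff_spectrum_le hM.isSelfAdjoint,
    hM.spectrum_real_eq_range_eigenvalues, Set.forall_mem_range]

lemma IsHermitian.sum_eigenvalues_eq_one {X : Matrix ι ι ℂ} (hX : X.IsHermitian)
    (htr : X.trace = 1) : ∑ i, hX.eigenvalues i = 1 := by
  have h := hX.trace_eq_sum_eigenvalues.symm.trans htr
  rw [← RCLike.ofReal_sum] at h
  exact RCLike.ofReal_injective (h.trans RCLike.ofReal_one.symm)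

lemma PosSemidef.le_one_of_trace_eq_one {X : Matrix ι ι ℂ} (hX : X.PosSemidef)
    (htr : X.trace = 1) : X ≤ 1 := by
  have hsum := hX.1.sum_eigenvalues_eq_one htr
  simpa using (hX.1.le_smul_one_iff (t := 1)).mpr fun i =>
    hsum ▸ Finset.single_le_sum (fun j _ => hX.eigenvalues_nonneg j) (Finset.mem_univ i)

lemma IsHermitian.eigenvalues_le_lambdaMax {M : Matrix ι ι ℂ} (hM : M.IsHermitian) (i : ι) :
    hM.eigenvalues i ≤ lambdaMax M := by
  rw [lambdaMax, dif_pos hM]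
  exact le_ciSup (Set.finite_range _).bddAbove i

lemma IsHermitian.le_lambdaMax_smul_one {M : Matrix ι ι ℂ} (hM : M.IsHermitian) :
    M ≤ lambdaMax M • (1 : Matrix ι ι ℂ) :=
  hM.le_smul_one_iff.mpr hM.eigenvalues_le_lambdaMax

lemma PosSemidef.lambdaMax_nonneg {M : Matrix ι ι ℂ} (hM : M.PosSemidef) : 0 ≤ lambdaMax M := by
  rw [lambdaMax, dif_pos hM.1]
  exact Real.iSup_nonneg hM.eigenvalues_nonneg

lemma lambdaMax_zero : lambdaMax (0 : Matrix ι ι ℂ) = 0 := by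
  rw [lambdaMax, dif_pos isHermitian_zero, isHermitian_zero.eigenvalues_eq_zero_iff.mpr rfl]
  exact Real.iSup_const_zero

lemma PosSemidef.neg_log_le_entropy {Y : Matrix ι ι ℂ} (hY : Y.PosSemidef) (htr : Y.trace = 1)
    {t : ℝ} (hle : Y ≤ t • (1 : Matrix ι ι ℂ)) : -Real.log t ≤ entropy Y := by
  set y := hY.1.eigenvalues
  have hy0 : ∀ i, 0 ≤ y i := hY.eigenvalues_nonneg
  have hyt : ∀ i, y i ≤ t := hY.1.le_smul_one_iff.mp hle
  have hterm (i : ι) : y i * Real.log (y i) ≤ y i * Real.log t := by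
    rcases (hy0 i).eq_or_lt with h0 | hpos
    · rw [← h0, zero_mul, zero_mul]
    · exact mul_le_mul_of_nonneg_left (Real.log_le_log hpos (hyt i)) hpos.le
  rw [entropy, dif_pos hY.1, neg_le_neg_iff]
  calc ∑ i, y i * Real.log (y i) ≤ ∑ i, y i * Real.log t := Finset.sum_le_sum fun i _ => hterm i
    _ = Real.log t := by rw [← Finset.sum_mul, hY.1.sum_eigenvalues_eq_one htr, one_mul]

end Spectrum

section MinEntropy

variable {ι κ : Type*} [Fintype ι] [DecidableEq ι] [Fintype κ] [DecidableEq κ]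

lemma le_minEntropy [Nonempty ι] {τ : Matrix ι ι ℂ → Matrix κ κ ℂ} {c : ℝ}
    (h : ∀ X : Matrix ι ι ℂ, X.PosSemidef → X.trace = 1 → c ≤ entropy (τ X)) :
    c ≤ minEntropy τ := by
  have hcard : (Fintype.card ι : ℂ) ≠ 0 := Nat.cast_ne_zero.mpr Fintype.card_ne_zero
  refine le_csInf ⟨_, (Fintype.card ι : ℂ)⁻¹ • 1, PosSemidef.one.smul (by positivity), ?_, rfl⟩ ?_
  · rw [trace_smul, trace_one, smul_eq_mul, inv_mul_cancel₀ hcard]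
  · rintro _ ⟨X, hX, htr, rfl⟩
    exact h X hX htr

lemma minEntropy_of_isEmpty [IsEmpty ι] (τ : Matrix ι ι ℂ → Matrix κ κ ℂ) :
    minEntropy τ = 0 := by
  simp [minEntropy]

end MinEntropy

section PiKron

variable {κ α β γ R : Type*} [Fintype κ] [CommSemiring R]

def piKron (B : κ → Matrix α β R) : Matrix (κ → α) (κ → β) R :=
  of fun r c => ∏ j, B j (r j) (c j)

lemma piKron_mul [DecidableEq κ] [Fintype β] (B : κ → Matrix α β R) (C : κ → Matrix β γ R) :
    piKron B * piKron C = piKron fun j => B j * C j := by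
  ext r c
  simp only [mul_apply, piKron, of_apply, Fintype.prod_sum, ← Finset.prod_mul_distrib]

lemma piKron_conjTranspose [StarRing R] (B : κ → Matrix α β R) :
    (piKron B)ᴴ = piKron fun j => (B j)ᴴ := by
  ext r c
  simp [piKron, star_prod]

lemma piKron_one [DecidableEq α] : piKron (fun _ : κ => (1 : Matrix α α R)) = 1 := by
  ext r c
  simp [piKron, one_apply, Finset.prod_boole, funext_iff]

lemma sum_piKron [DecidableEq κ] {ι : Type*} [Fintype ι] (F : κ → ι → Matrix α β R) :
    ∑ i : κ → ι, piKron (fun j => F j (i j)) = piKron fun j => ∑ a, F j a := by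
  ext r c
  simp only [sum_apply, piKron, of_apply, Fintype.prod_sum]

lemma sum_piKron_conjTranspose_mul [DecidableEq κ] [StarRing R] [Fintype α] {ι : Type*}
    [Fintype ι] (A : ι → Matrix α β R) :
    ∑ i : κ → ι, (piKron fun j => A (i j))ᴴ * piKron (fun j => A (i j))
      = piKron fun _ : κ => ∑ a, (A a)ᴴ * A a := by
  simp only [piKron_conjTranspose, piKron_mul]
  exact sum_piKron fun _ a => (A a)ᴴ * A a

lemma sum_piKron_mul_conjTranspose [DecidableEq κ] [StarRing R] [Fintype β] {ι : Type*}
    [Fintype ι] (A : ι → Matrix α β R) :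
    ∑ i : κ → ι, piKron (fun j => A (i j)) * (piKron fun j => A (i j))ᴴ
      = piKron fun _ : κ => ∑ a, A a * (A a)ᴴ := by
  simp only [piKron_conjTranspose, piKron_mul]
  exact sum_piKron fun _ a => A a * (A a)ᴴ

lemma piKron_succ {p : ℕ} (B : Fin (p + 1) → Matrix α β R) :
    piKron B = (B 0 ⊗ₖ piKron fun j => B j.succ).submatrix (Fin.consEquiv fun _ => α).symm
      (Fin.consEquiv fun _ => β).symm := by
  ext r c
  simp only [piKron, Fin.prod_univ_succ, of_apply, submatrix_apply, Fin.consEquiv_symm_apply,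
    kroneckerMap_apply]
  rfl

end PiKron

section PiKronOrder

variable {α β : Type*} [Fintype α] [DecidableEq α] [Fintype β] [DecidableEq β]

lemma kronecker_le_smul_one {A : Matrix α α ℂ} {B : Matrix β β ℂ} {a b : ℝ}
    (hA : A.PosSemidef) (hAa : A ≤ a • (1 : Matrix α α ℂ)) (hb : 0 ≤ b)
    (hBb : B ≤ b • (1 : Matrix β β ℂ)) : A ⊗ₖ B ≤ (a * b) • (1 : Matrix (α × β) (α × β) ℂ) := by
  have hsplit : (a * b) • (1 : Matrix (α × β) (α × β) ℂ) - A ⊗ₖ B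
      = (a • 1 - A) ⊗ₖ (b • (1 : Matrix β β ℂ)) + A ⊗ₖ (b • 1 - B) := by
    rw [sub_eq_iff_eq_add, add_assoc, ← kronecker_add, sub_add_cancel, ← add_kronecker,
      sub_add_cancel, smul_kronecker, kronecker_smul, one_kronecker_one, smul_smul]
  rw [le_iff, hsplit]
  exact (PosSemidef.kronecker hAa (PosSemidef.one.smul hb)).add (hA.kronecker hBb)

lemma piKron_le_smul_one : ∀ {p : ℕ} {B : Fin p → Matrix α α ℂ} {t : Fin p → ℝ},
    (∀ j, (B j).PosSemidef) → (∀ j, 0 ≤ t j) → (∀ j, B j ≤ t j • (1 : Matrix α α ℂ)) →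
      piKron B ≤ (∏ j, t j) • (1 : Matrix (Fin p → α) (Fin p → α) ℂ)
  | 0, B, t, _, _, _ => by
    refine le_of_eq ?_
    ext r c
    simp [piKron, Subsingleton.elim r c]
  | p + 1, B, t, hB, ht, hle => by
    have htail := piKron_le_smul_one (fun j => hB j.succ) (fun j => ht j.succ) fun j => hle j.succ
    have hkron :=
      kronecker_le_smul_one (hB 0) (hle 0) (Finset.prod_nonneg fun j _ => ht j.succ) htail
    rw [le_iff] at hkron ⊢
    rw [piKron_succ, Fin.prod_univ_succ]
    convert hkron.submatrix (Fin.consEquiv fun _ => α).symm using 1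
    -- `submatrix` commutes with `-` and `•` definitionally
    rw [← submatrix_one_equiv (Fin.consEquiv fun _ => α).symm]
    rfl

end PiKronOrder

section Kraus

variable {ι μ ν : Type*} [Fintype ι] [Fintype μ] [Fintype ν] [DecidableEq ν]

lemma trace_sum_mul_mul_conjTranspose {K : ι → Matrix μ ν ℂ} (hK : ∑ i, (K i)ᴴ * K i = 1)
    (X : Matrix ν ν ℂ) : (∑ i, K i * X * (K i)ᴴ).trace = X.trace := by
  simp_rw [trace_sum, trace_mul_cycle (K _) X, ← trace_sum, ← Finset.sum_mul, hK, one_mul]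

lemma sum_mul_mul_conjTranspose_le (K : ι → Matrix μ ν ℂ) {X : Matrix ν ν ℂ} (hX : X ≤ 1) :
    ∑ i, K i * X * (K i)ᴴ ≤ ∑ i, K i * (K i)ᴴ := by
  rw [le_iff, ← Finset.sum_sub_distrib]
  refine posSemidef_sum _ fun i _ => ?_
  have h := (le_iff.mp hX).mul_mul_conjTranspose_same (K i)
  rwa [Matrix.mul_sub, Matrix.sub_mul, Matrix.mul_one] at h

lemma neg_log_le_minEntropy [DecidableEq μ] [Nonempty ν] {K : ι → Matrix μ ν ℂ}
    (hK : ∑ i, (K i)ᴴ * K i = 1) {t : ℝ} (ht : ∑ i, K i * (K i)ᴴ ≤ t • (1 : Matrix μ μ ℂ)) :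
    -Real.log t ≤ minEntropy fun X : Matrix ν ν ℂ => ∑ i, K i * X * (K i)ᴴ := by
  refine le_minEntropy fun X hX htr => PosSemidef.neg_log_le_entropy ?_ ?_ ?_
  · exact posSemidef_sum _ fun i _ => hX.mul_mul_conjTranspose_same (K i)
  · rw [trace_sum_mul_mul_conjTranspose hK, htr]
  · exact (sum_mul_mul_conjTranspose_le K (hX.le_one_of_trace_eq_one htr)).trans ht

end Kraus

end Matrix

lemma kronPow_eq_piKron {l m n : ℕ} (p : ℕ) (A : Fin l → Matrix (Fin m) (Fin n) ℂ)
    (i : Fin p → Fin l) : kronPow p A i = piKron fun j => A (i j) :=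
  rfl

theorem stmt_5_general {n m l : ℕ} (A : Fin l → Matrix (Fin m) (Fin n) ℂ)
    (hA : ∑ i, (A i)ᴴ * A i = 1) (p : ℕ) :
    -(p : ℝ) * Real.log (lambdaMax (∑ i, A i * (A i)ᴴ)) ≤
      minEntropy (fun X : Matrix (Fin p → Fin n) (Fin p → Fin n) ℂ =>
        ∑ i : Fin p → Fin l, kronPow p A i * X * (kronPow p A i)ᴴ) := by
  have hM : (∑ i, A i * (A i)ᴴ).PosSemidef :=
    posSemidef_sum _ fun i _ => posSemidef_self_mul_conjTranspose (A i)
  rcases isEmpty_or_nonempty (Fin p → Fin n) with hempty | hne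
  · have : IsEmpty (Fin n) := (isEmpty_fun.mp hempty).2
    have hM0 : ∑ i, A i * (A i)ᴴ = 0 := by
      ext
      simp [Matrix.sum_apply, mul_apply]
    rw [minEntropy_of_isEmpty, hM0, lambdaMax_zero, Real.log_zero, mul_zero]
  · have hK : ∑ i : Fin p → Fin l, (kronPow p A i)ᴴ * kronPow p A i = 1 := by
      simp only [kronPow_eq_piKron, sum_piKron_conjTranspose_mul, hA, piKron_one]
    have hbound : ∑ i : Fin p → Fin l, kronPow p A i * (kronPow p A i)ᴴ
        ≤ lambdaMax (∑ i, A i * (A i)ᴴ) ^ p • (1 : Matrix (Fin p → Fin m) _ ℂ) := by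
      simp only [kronPow_eq_piKron, sum_piKron_mul_conjTranspose, ← Fin.prod_const]
      exact piKron_le_smul_one (fun _ => hM) (fun _ => hM.lambdaMax_nonneg)
        fun _ => hM.1.le_lambdaMax_smul_one
    simpa [Real.log_pow] using neg_log_le_minEntropy hK hbound

/-- For a quantum channel τ with Kraus operators A₁,…,A_l and
A(τ) = ∑ᵢ Aᵢ Aᵢ*, for every p ≥ 1 the minimum output entropy of the p-fold tensor
power channel ⊗ᵖτ (whose Kraus operators are all p-fold Kronecker products of the Aᵢ)
satisfies H(⊗ᵖτ) ≥ -p log λ₁(A(τ)). -/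
theorem stmt_5 {n m l : ℕ} (A : Fin l → Matrix (Fin m) (Fin n) ℂ)
    (hA : ∑ i, (A i)ᴴ * A i = 1) (p : ℕ) (hp : 1 ≤ p) :
    -(p : ℝ) * Real.log (lambdaMax (∑ i, A i * (A i)ᴴ)) ≤
      minEntropy (fun X : Matrix (Fin p → Fin n) (Fin p → Fin n) ℂ =>
        ∑ i : Fin p → Fin l, kronPow p A i * X * (kronPow p A i)ᴴ) :=
  stmt_5_general A hA p
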